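/- arXiv:2002.09952 — 4 statements merged into one kernel-verified Lean document; each statement's English description precedes it below -/
import Mathlib

section
/- For every Weyl group of the types A_n, B_n, D_n, E_6, E_7, E_8, F_4, G_2 and every integer d ≥ 1, the product ∏_{i=1}^{n} (d·h + e_i − 1) is divisible by ∏_{i=1}^{n} (e_i + 1); that is, the positive Fuss-Catalan number C_d^+(W) is a (positive) integer. -/
/-- The simply-laced and non-simply-laced finite Weyl group types considered. -/
inductive WeylType where
  | A (n : ℕ)
  | B (n : ℕ)
  | D (n : ℕ)
  | E6
  | E7
  | E8
  | F4
  | G2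

/-- The exponents `e_1, …, e_n` of the Weyl group of the given type. -/
def WeylType.exponents : WeylType → List ℕ
  | A n => (List.range n).map (· + 1)
  | B n => (List.range n).map (fun i => 2 * i + 1)
  | D n => (List.range (n - 1)).map (fun i => 2 * i + 1) ++ [n - 1]
  | E6 => [1, 4, 5, 7, 8, 11]
  | E7 => [1, 5, 7, 9, 11, 13, 17]
  | E8 => [1, 7, 11, 13, 17, 19, 23, 29]
  | F4 => [1, 5, 7, 11]
  | G2 => [1, 5]

/-- The Coxeter number `h` of the Weyl group of the given type. -/
def WeylType.coxeterNumber : WeylType → ℕ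
  | A n => n + 1
  | B n => 2 * n
  | D n => 2 * (n - 1)
  | E6 => 12
  | E7 => 18
  | E8 => 30
  | F4 => 12
  | G2 => 6

/-- Admissible ranks for each family. -/
def WeylType.valid : WeylType → Prop
  | A n => 1 ≤ n
  | B n => 2 ≤ n
  | D n => 4 ≤ n
  | _ => True

/-!
For `A`, `B` and `D` the numerator is, up to a power of two, a rising factorial
`m^(k) = m (m + 1) ⋯ (m + k - 1)` (times `2m + k - 1` for `D`), and the claim reduces to
`k! ∣ m^(k)` and two divisibilities by `(k + 1)!`: for `A`, `m^(n) = n! C(m+n-1, n)` with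
`(n + 1) C(m+n-1, n+1) = (m - 1) C(m+n-1, n)` and `m - 1` prime to `n + 1` since `n + 1 ∣ m`;
for `D`, `m^(k) (2m + k - 1) = m^(k+1) + (m - 1)^(k+1)`.
For the exceptional types the numerator is a polynomial of degree `n` in `d`, so by the
Gregory–Newton formula it is divisible by `∏ (e_i + 1)` for all `d` as soon as it is for
`d = 0, …, n`, which is a finite computation.
-/

open Nat Polynomial

theorem List.prod_map_range {M : Type*} [CommMonoid M] (f : ℕ → M) (n : ℕ) :
    ((List.range n).map f).prod = ∏ i ∈ Finset.range n, f i :=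
  rfl

theorem Nat.factorial_succ_dvd_ascFactorial_of_dvd {m n : ℕ} (h : n + 1 ∣ m) :
    (n + 1)! ∣ m.ascFactorial n := by
  rcases Nat.eq_zero_or_pos m with rfl | hm
  · cases n <;> simp [zero_ascFactorial]
  have hcop : Coprime (n + 1) (m - 1) :=
    ((coprime_self_sub_right hm).mpr (coprime_one_right m)).coprime_dvd_left h
  have hchoose := choose_succ_right_eq (m + n - 1) n
  rw [show m + n - 1 - n = m - 1 by omega] at hchoose
  rw [ascFactorial_eq_factorial_mul_choose', factorial_succ, mul_comm (n + 1)]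
  exact mul_dvd_mul_left _ (hcop.dvd_of_dvd_mul_right ⟨_, by rw [← hchoose, mul_comm]⟩)

theorem Nat.factorial_succ_dvd_ascFactorial_mul (m k : ℕ) :
    (k + 1)! ∣ m.ascFactorial k * (2 * m + k - 1) := by
  rcases m with _ | m
  · cases k <;> simp [zero_ascFactorial]
  have hsplit : (m + 1).ascFactorial k * (2 * (m + 1) + k - 1) =
      (m + 1).ascFactorial (k + 1) + m.ascFactorial (k + 1) := by
    rw [ascFactorial_succ (n := m + 1), ascFactorial_succ (n := m), ← succ_ascFactorial m k,
      show 2 * (m + 1) + k - 1 = m + 1 + k + m by omega]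
    ring
  exact hsplit ▸ dvd_add (factorial_dvd_ascFactorial _ _) (factorial_dvd_ascFactorial _ _)

theorem Polynomial.dvd_eval_natCast_of_natDegree_le {R : Type*} [CommRing R] {P : R[X]} {a : R}
    {n : ℕ} (hP : P.natDegree ≤ n) (h : ∀ k ≤ n, a ∣ P.eval (k : R)) (d : ℕ) :
    a ∣ P.eval (d : R) := by
  -- `P(d) = ∑ C(d, k) Δᵏ P(0)`, and `Δᵏ P(0)` is a `ℤ`-combination of `P(0), …, P(k)`
  have hnewton := shift_eq_sum_fwdDiff_iter 1 P.eval d 0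
  rw [zero_add, nsmul_one] at hnewton
  rw [hnewton]
  refine Finset.dvd_sum fun k _ => ?_
  rw [nsmul_eq_mul]
  refine dvd_mul_of_dvd_right ?_ _
  by_cases hk : k ≤ n
  · rw [fwdDiff_iter_eq_sum_shift]
    refine Finset.dvd_sum fun j hj => ?_
    rw [zsmul_eq_mul, zero_add, nsmul_one]
    exact dvd_mul_of_dvd_right (h j (by rw [Finset.mem_range] at hj; omega)) _
  · rw [fwdDiff_iter_eq_zero_of_degree_lt (by omega)]
    exact dvd_zero a

theorem natCast_prod_map_mul_add_sub_one_eq_eval (h d : ℕ) {es : List ℕ}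
    (hes : ∀ e ∈ es, 1 ≤ e) :
    (((es.map fun e => d * h + e - 1).prod : ℕ) : ℤ) =
      (es.map fun e : ℕ => C (h : ℤ) * X + C ((e : ℤ) - 1)).prod.eval (d : ℤ) := by
  rw [eval_list_prod, Nat.cast_list_prod, List.map_map, List.map_map]
  refine congrArg List.prod (List.map_congr_left fun e he => ?_)
  simp only [Function.comp_apply, eval_add, eval_mul, eval_C, eval_X]
  push_cast [Nat.sub_add_cancel (hes e he), show 1 ≤ d * h + e by have := hes e he; omega]
  ring

theorem dvd_prod_map_mul_add_sub_one_of_forall_le_length {M h : ℕ} {es : List ℕ}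
    (hes : ∀ e ∈ es, 1 ≤ e)
    (hM : ∀ k ≤ es.length, M ∣ (es.map fun e => k * h + e - 1).prod) (d : ℕ) :
    M ∣ (es.map fun e => d * h + e - 1).prod := by
  rw [← Int.natCast_dvd_natCast, natCast_prod_map_mul_add_sub_one_eq_eval h d hes]
  refine dvd_eval_natCast_of_natDegree_le (n := es.length) ?_ (fun k hk => ?_) d
  · refine (natDegree_list_prod_le _).trans ?_
    refine (List.sum_le_card_nsmul _ 1 ?_).trans (by simp)
    simp only [List.map_map, List.forall_mem_map, Function.comp_apply]
    exact fun _ _ => natDegree_linear_le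
  · rw [← natCast_prod_map_mul_add_sub_one_eq_eval h k hes]
    exact Int.natCast_dvd_natCast.mpr (hM k hk)

namespace WeylType

/-- `∏ (e_i + 1)`, the order of `W`; `C_d⁺(W) = W.fussCatalanNumerator d / W.degreeProduct`. -/
def degreeProduct (W : WeylType) : ℕ :=
  (W.exponents.map fun e => e + 1).prod

def fussCatalanNumerator (W : WeylType) (d : ℕ) : ℕ :=
  (W.exponents.map fun e => d * W.coxeterNumber + e - 1).prod

theorem degreeProduct_A (n : ℕ) : (A n).degreeProduct = (n + 1)! := by
  rw [degreeProduct, exponents, List.map_map, List.prod_map_range,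
    ← Finset.prod_range_add_one_eq_factorial, Finset.prod_range_succ']
  simp only [Function.comp_apply, zero_add, mul_one]

theorem fussCatalanNumerator_A (n d : ℕ) :
    (A n).fussCatalanNumerator d = (d * (n + 1)).ascFactorial n := by
  rw [fussCatalanNumerator, exponents, coxeterNumber, List.map_map, List.prod_map_range,
    ascFactorial_eq_prod_range]
  exact Finset.prod_congr rfl fun i _ => by simp only [Function.comp_apply]; omega

theorem degreeProduct_B (n : ℕ) : (B n).degreeProduct = 2 ^ n * n ! := by
  rw [degreeProduct, exponents, List.map_map, List.prod_map_range]
  calc ∏ i ∈ Finset.range n, (2 * i + 1 + 1) = ∏ i ∈ Finset.range n, 2 * (i + 1) :=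
        Finset.prod_congr rfl fun i _ => by ring
    _ = 2 ^ n * n ! := by
      rw [Finset.prod_mul_distrib, Finset.prod_const, Finset.card_range,
        Finset.prod_range_add_one_eq_factorial]

theorem fussCatalanNumerator_B (n d : ℕ) :
    (B n).fussCatalanNumerator d = 2 ^ n * (d * n).ascFactorial n := by
  rw [fussCatalanNumerator, exponents, coxeterNumber, List.map_map, List.prod_map_range]
  calc ∏ i ∈ Finset.range n, (d * (2 * n) + (2 * i + 1) - 1)
        = ∏ i ∈ Finset.range n, 2 * (d * n + i) :=
        Finset.prod_congr rfl fun i _ => by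
          rw [Nat.add_sub_assoc le_add_self, Nat.add_sub_cancel]; ring
    _ = 2 ^ n * (d * n).ascFactorial n := by
      rw [Finset.prod_mul_distrib, Finset.prod_const, Finset.card_range,
        ascFactorial_eq_prod_range]

theorem exponents_D (k : ℕ) : (D (k + 1)).exponents = (B k).exponents ++ [k] :=
  rfl

theorem degreeProduct_D (k : ℕ) :
    (D (k + 1)).degreeProduct = (B k).degreeProduct * (k + 1) := by
  simp [degreeProduct, exponents_D]

theorem fussCatalanNumerator_D (k d : ℕ) :
    (D (k + 1)).fussCatalanNumerator d =
      (B k).fussCatalanNumerator d * (d * (2 * k) + k - 1) := by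
  simp [fussCatalanNumerator, exponents_D, coxeterNumber]

theorem degreeProduct_dvd_fussCatalanNumerator (W : WeylType) (d : ℕ) :
    W.degreeProduct ∣ W.fussCatalanNumerator d := by
  cases W with
  | A n =>
    rw [degreeProduct_A, fussCatalanNumerator_A]
    exact factorial_succ_dvd_ascFactorial_of_dvd (dvd_mul_left _ _)
  | B n =>
    rw [degreeProduct_B, fussCatalanNumerator_B]
    exact mul_dvd_mul_left _ (factorial_dvd_ascFactorial _ _)
  | D n =>
    rcases n with _ | k
    · simp [degreeProduct, fussCatalanNumerator, exponents]
    rw [degreeProduct_D, fussCatalanNumerator_D, degreeProduct_B, fussCatalanNumerator_B,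
      mul_assoc, mul_assoc, mul_comm k !, ← factorial_succ, mul_left_comm d]
    exact mul_dvd_mul_left _ (factorial_succ_dvd_ascFactorial_mul _ _)
  | _ => exact dvd_prod_map_mul_add_sub_one_of_forall_le_length (by decide) (by decide) d

theorem two_le_coxeterNumber {W : WeylType} (hW : W.valid) : 2 ≤ W.coxeterNumber := by
  cases W <;> simp only [valid, coxeterNumber] at hW ⊢ <;> omega

theorem fussCatalanNumerator_pos {W : WeylType} (hW : W.valid) {d : ℕ} (hd : 1 ≤ d) :
    0 < W.fussCatalanNumerator d := by
  have hdh : 2 ≤ d * W.coxeterNumber := by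
    simpa using Nat.mul_le_mul hd (two_le_coxeterNumber hW)
  exact List.prod_pos fun _ hx => by obtain ⟨e, -, rfl⟩ := List.mem_map.mp hx; omega

theorem degreeProduct_pos (W : WeylType) : 0 < W.degreeProduct :=
  List.prod_pos fun _ hx => by obtain ⟨e, -, rfl⟩ := List.mem_map.mp hx; omega

end WeylType

/-- For every Weyl group `W` of type `A_n, B_n, D_n, E₆, E₇, E₈, F₄, G₂` and every `d ≥ 1`,
the product `∏ (d·h + e_i − 1)` is divisible by `∏ (e_i + 1)`, and the quotient — the
positive Fuss-Catalan number `C_d⁺(W)` — is a positive integer. -/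
theorem positive_fuss_catalan_is_positive_integer (W : WeylType) (hW : W.valid)
    (d : ℕ) (hd : 1 ≤ d) :
    ((W.exponents.map (fun e => e + 1)).prod ∣
        (W.exponents.map (fun e => d * W.coxeterNumber + e - 1)).prod) ∧
      0 < (W.exponents.map (fun e => d * W.coxeterNumber + e - 1)).prod /
          (W.exponents.map (fun e => e + 1)).prod := by
  have hdvd : W.degreeProduct ∣ W.fussCatalanNumerator d :=
    W.degreeProduct_dvd_fussCatalanNumerator d
  exact ⟨hdvd, Nat.div_pos (Nat.le_of_dvd (W.fussCatalanNumerator_pos hW hd) hdvd)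
    W.degreeProduct_pos⟩
end

section
/- Under the standing assumption that every silting object P of a thick subcategory 𝒰 of a triangulated category T induces a bounded t-structure T = P[<0]^⊥ ⊥ P[≥0]^⊥, the map sending a silting object P to its silting heart ℋ_P = P[<0]^⊥ ∩ P[>0]^⊥[1] is a poset isomorphism from silt 𝒰 (ordered by Q ≥ P iff Hom(Q, P[>0]) = 0) onto the set of silting hearts (ordered by ℋ ≥ ℋ' iff Hom(ℋ', ℋ[<0]) = 0). -/
open CategoryTheory CategoryTheory.Limits CategoryTheory.Pretriangulated

universe v u

variable {C : Type u} [Category.{v} C] [Preadditive C] [HasZeroObject C]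
  [HasShift C ℤ] [∀ n : ℤ, (shiftFunctor C n).Additive] [Pretriangulated C]

/-- The shift `S⟦n⟧` of a class of objects (closed under isomorphism). -/
def shiftSet (S : Set C) (n : ℤ) : Set C :=
  {X : C | ∃ Y ∈ S, Nonempty (X ≅ Y⟦n⟧)}

/-- A class of objects is thick if it contains the zero objects and is closed under
isomorphisms, shifts, cones of morphisms (two-out-of-three in triangles) and retracts
(direct summands). -/
def IsThick (S : Set C) : Prop :=
  (∀ X : C, Limits.IsZero X → X ∈ S) ∧
  (∀ X Y : C, (X ≅ Y) → X ∈ S → Y ∈ S) ∧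
  (∀ X : C, ∀ n : ℤ, X ∈ S → X⟦n⟧ ∈ S) ∧
  (∀ T ∈ distTriang C, T.obj₁ ∈ S → T.obj₂ ∈ S → T.obj₃ ∈ S) ∧
  (∀ X Y : C, ∀ r : X ⟶ Y, ∀ s : Y ⟶ X, s ≫ r = 𝟙 Y → X ∈ S → Y ∈ S)

/-- The thick subcategory generated by a class of objects. -/
def thickClosure (S : Set C) : Set C :=
  ⋂₀ {P : Set C | S ⊆ P ∧ IsThick P}

/-- `P` is a silting object of the thick subcategory `𝒰`:
`Hom(P, P[i]) = 0` for `i > 0` and `thick(P) = 𝒰`. -/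
def IsSilting (𝒰 : Set C) (P : C) : Prop :=
  (∀ i : ℤ, 0 < i → ∀ f : P ⟶ P⟦i⟧, f = 0) ∧ thickClosure {P} = 𝒰

/-- The aisle `P[<0]^⊥` of the silting t-structure associated with `P`. -/
def siltAisle (P : C) : Set C :=
  {X : C | ∀ i : ℤ, i < 0 → ∀ f : P⟦i⟧ ⟶ X, f = 0}

/-- The coaisle `P[≥0]^⊥` of the silting t-structure associated with `P`. -/
def siltCoaisle (P : C) : Set C :=
  {X : C | ∀ i : ℤ, 0 ≤ i → ∀ f : P⟦i⟧ ⟶ X, f = 0}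

/-- `(U, V)` is a bounded t-structure on `C`. -/
def IsBoundedTStructure (U V : Set C) : Prop :=
  (∀ X ∈ U, ∀ Y ∈ V, ∀ f : X ⟶ Y, f = 0) ∧
  (∀ X : C, ∃ (A B : C) (_ : A ∈ U) (_ : B ∈ V)
    (f : A ⟶ X) (g : X ⟶ B) (h : B ⟶ A⟦(1 : ℤ)⟧),
      Triangle.mk f g h ∈ distTriang C) ∧
  (V = {X : C | ∀ A ∈ U, ∀ f : A ⟶ X, f = 0}) ∧
  (U = {Y : C | ∀ B ∈ V, ∀ f : Y ⟶ B, f = 0}) ∧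
  (∀ X ∈ U, X⟦(1 : ℤ)⟧ ∈ U) ∧
  (∀ X : C, ∃ i : ℤ, X ∈ shiftSet U i) ∧
  (∀ X : C, ∃ i : ℤ, X ∈ shiftSet V i)

/-- The silting heart `ℋ_P = P[<0]^⊥ ∩ (P[≥0]^⊥)[1]` associated with a silting object `P`. -/
def siltHeart (P : C) : Set C :=
  siltAisle P ∩ shiftSet (siltCoaisle P) 1

/-!
A bounded t-structure `(U, V)` is determined by its heart `ℋ = U ∩ V⟦1⟧`: by dévissage along
truncation triangles, `X ∈ U` as soon as `Hom(X, ℋ⟦<0⟧) = 0`, and `Z ∈ V` as soon as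
`Hom(ℋ⟦≥0⟧, Z) = 0`. The relation `Q ≥ P` says exactly that `P` lies in the aisle of `Q`. Then the
coaisle of `Q` is contained in that of `P`, which contains `ℋ_Q⟦<0⟧` and is right orthogonal to
`ℋ_P`. Conversely, if `Hom(ℋ_P, ℋ_Q⟦<0⟧) = 0`, the dévissage for `P` puts `ℋ_Q⟦<0⟧` in the coaisle
of `P`, which is right orthogonal to `P` itself; so the dévissage for `Q` puts `P` in the aisle of
`Q`. Equivalent silting objects have equal coaisles, hence equal aisles and hearts.
-/

section HomVanishing

variable {D : Type*} [Category D] [HasZeroMorphisms D] {X Y X' Y' : D}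

theorem forall_eq_zero_congr (e : (X ⟶ Y) ≃ (X' ⟶ Y')) :
    (∀ f : X ⟶ Y, f = 0) ↔ ∀ f : X' ⟶ Y', f = 0 := by
  simpa only [← subsingleton_iff_forall_eq] using e.subsingleton_congr

variable [HasShift D ℤ]

theorem forall_shift_eq_zero_iff (a c : ℤ) (h : a + c = 0) :
    (∀ f : X⟦a⟧ ⟶ Y, f = 0) ↔ ∀ f : X ⟶ Y⟦c⟧, f = 0 :=
  forall_eq_zero_congr ((shiftEquiv' D a c h).toAdjunction.homEquiv X Y)

theorem forall_shift_shift_eq_zero_iff (a b c : ℤ) (h : a + c = b) :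
    (∀ f : X⟦a⟧ ⟶ Y⟦b⟧, f = 0) ↔ ∀ f : X ⟶ Y⟦c⟧, f = 0 := by
  rw [forall_shift_eq_zero_iff a (-a) (by omega)]
  exact forall_eq_zero_congr
    ((Iso.refl X).homCongr ((shiftFunctorAdd' D b (-a) c (by omega)).app Y).symm)

end HomVanishing

theorem forall_hom_to_obj₂_eq_zero {T : Triangle C} (hT : T ∈ distTriang C) {W : C}
    (h₁ : ∀ f : W ⟶ T.obj₁, f = 0) (h₃ : ∀ f : W ⟶ T.obj₃, f = 0) (f : W ⟶ T.obj₂) : f = 0 := by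
  obtain ⟨g, rfl⟩ := Triangle.coyoneda_exact₂ T hT f (h₃ _)
  rw [h₁ g, zero_comp]

theorem forall_hom_from_obj₂_eq_zero {T : Triangle C} (hT : T ∈ distTriang C) {W : C}
    (h₁ : ∀ f : T.obj₁ ⟶ W, f = 0) (h₃ : ∀ f : T.obj₃ ⟶ W, f = 0) (f : T.obj₂ ⟶ W) : f = 0 := by
  obtain ⟨g, rfl⟩ := Triangle.yoneda_exact₂ T hT f (h₁ _)
  rw [h₃ g, comp_zero]

theorem mem_shiftSet_iff {S : Set C} (hS : ∀ {X X' : C}, (X ≅ X') → X' ∈ S → X ∈ S)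
    {X : C} {n : ℤ} : X ∈ shiftSet S n ↔ X⟦-n⟧ ∈ S :=
  ⟨fun ⟨Y, hY, ⟨e⟩⟩ => hS ((shiftFunctor C (-n)).mapIso e ≪≫ shiftShiftNeg Y n) hY,
    fun h => ⟨X⟦-n⟧, h, ⟨(shiftNegShift X n).symm⟩⟩⟩

namespace IsBoundedTStructure

variable {U V : Set C}

theorem hom_eq_zero (t : IsBoundedTStructure U V) {X Y : C} (hX : X ∈ U) (hY : Y ∈ V)
    (f : X ⟶ Y) : f = 0 :=
  t.1 X hX Y hY f

theorem mem_aisle_iff (t : IsBoundedTStructure U V) {X : C} :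
    X ∈ U ↔ ∀ Y ∈ V, ∀ f : X ⟶ Y, f = 0 := by
  rw [t.2.2.2.1]
  rfl

theorem mem_coaisle_iff (t : IsBoundedTStructure U V) {Y : C} :
    Y ∈ V ↔ ∀ X ∈ U, ∀ f : X ⟶ Y, f = 0 := by
  rw [t.2.2.1]
  rfl

theorem mem_aisle_of_iso (t : IsBoundedTStructure U V) {X X' : C} (e : X ≅ X') (hX' : X' ∈ U) :
    X ∈ U := by
  rw [t.mem_aisle_iff] at hX' ⊢
  exact fun Y hY => (forall_eq_zero_congr (e.homCongr (Iso.refl Y))).2 (hX' Y hY)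

theorem mem_coaisle_of_iso (t : IsBoundedTStructure U V) {Y Y' : C} (e : Y ≅ Y')
    (hY' : Y' ∈ V) : Y ∈ V := by
  rw [t.mem_coaisle_iff] at hY' ⊢
  exact fun X hX => (forall_eq_zero_congr ((Iso.refl X).homCongr e)).2 (hY' X hX)

theorem isZero_of_mem_aisle_of_mem_coaisle (t : IsBoundedTStructure U V) {X : C} (hU : X ∈ U)
    (hV : X ∈ V) : IsZero X :=
  (IsZero.iff_id_eq_zero X).2 (t.hom_eq_zero hU hV _)

theorem shift_mem_aisle (t : IsBoundedTStructure U V) {X : C} (hX : X ∈ U) {n : ℤ}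
    (hn : 0 ≤ n) : X⟦n⟧ ∈ U := by
  lift n to ℕ using hn
  induction n with
  | zero => exact t.mem_aisle_of_iso ((shiftFunctorZero C ℤ).app X) hX
  | succ n ih =>
    exact t.mem_aisle_of_iso ((shiftFunctorAdd' C (n : ℤ) 1 _ (by push_cast; rfl)).app X)
      (t.2.2.2.2.1 _ ih)

theorem shift_mem_coaisle (t : IsBoundedTStructure U V) {Y : C} (hY : Y ∈ V) {n : ℤ}
    (hn : n ≤ 0) : Y⟦n⟧ ∈ V :=
  t.mem_coaisle_iff.2 fun _ hX => (forall_shift_eq_zero_iff (-n) n (by omega)).1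
    (t.hom_eq_zero (t.shift_mem_aisle hX (by omega)) hY)

theorem hom_shift_eq_zero (t : IsBoundedTStructure U V) {X Y : C} (hX : X ∈ U) (hY : Y ∈ V)
    {a b : ℤ} (hab : b ≤ a) : ∀ f : X⟦a⟧ ⟶ Y⟦b⟧, f = 0 :=
  (forall_shift_shift_eq_zero_iff a b (b - a) (by ring)).2
    (t.hom_eq_zero hX (t.shift_mem_coaisle hY (by omega)))

theorem shift_mem_coaisle_of_mem_shiftSet (t : IsBoundedTStructure U V) {Y : C}
    (hY : Y ∈ shiftSet V 1) {i : ℤ} (hi : i < 0) : Y⟦i⟧ ∈ V :=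
  t.mem_coaisle_of_iso ((shiftFunctorAdd' C (-1) (i + 1) i (by ring)).app Y)
    (t.shift_mem_coaisle ((mem_shiftSet_iff t.mem_coaisle_of_iso).1 hY) (by omega))

theorem exists_shift_mem_aisle (t : IsBoundedTStructure U V) (X : C) :
    ∃ n : ℕ, X⟦(n : ℤ)⟧ ∈ U := by
  obtain ⟨i, hi⟩ := t.2.2.2.2.2.1 X
  rw [mem_shiftSet_iff t.mem_aisle_of_iso] at hi
  exact ⟨(-i).toNat, t.mem_aisle_of_iso ((shiftFunctorAdd' C (-i) _ _ (by omega)).app X)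
    (t.shift_mem_aisle hi (n := (-i).toNat + i) (by omega))⟩

theorem exists_shift_mem_coaisle (t : IsBoundedTStructure U V) (X : C) :
    ∃ n : ℕ, X⟦-(n : ℤ)⟧ ∈ V := by
  obtain ⟨i, hi⟩ := t.2.2.2.2.2.2 X
  rw [mem_shiftSet_iff t.mem_coaisle_of_iso] at hi
  exact ⟨i.toNat, t.mem_coaisle_of_iso ((shiftFunctorAdd' C (-i) _ _ (by omega)).app X)
    (t.shift_mem_coaisle hi (n := i - i.toNat) (by omega))⟩

theorem shift_mem_coaisle_of_distTriang (t : IsBoundedTStructure U V) {T : Triangle C}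
    (hT : T ∈ distTriang C) (h₃ : T.obj₃ ∈ V) {n : ℤ} (hn : -1 ≤ n)
    (h₂ : T.obj₂⟦-n⟧ ∈ V) : T.obj₁⟦-n⟧ ∈ V := by
  refine t.mem_coaisle_iff.2 fun W hW => (forall_shift_eq_zero_iff n (-n) (by ring)).1 ?_
  exact forall_hom_to_obj₂_eq_zero (inv_rot_of_distTriang T hT)
    (t.hom_shift_eq_zero hW h₃ (by omega))
    ((forall_shift_eq_zero_iff n (-n) (by ring)).2 (t.hom_eq_zero hW h₂))

theorem shift_mem_aisle_of_distTriang (t : IsBoundedTStructure U V) {T : Triangle C}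
    (hT : T ∈ distTriang C) (h₁ : T.obj₁ ∈ U) {n : ℤ} (hn : -1 ≤ n)
    (h₂ : T.obj₂⟦n⟧ ∈ U) : T.obj₃⟦n⟧ ∈ U := by
  refine t.mem_aisle_iff.2 fun W hW => (forall_shift_eq_zero_iff n (-n) (by ring)).2 ?_
  exact forall_hom_from_obj₂_eq_zero (rot_of_distTriang T hT)
    ((forall_shift_eq_zero_iff n (-n) (by ring)).1 (t.hom_eq_zero h₂ hW))
    (t.hom_shift_eq_zero h₁ hW (by omega))

theorem mem_aisle_of_forall_heart (t : IsBoundedTStructure U V) {X : C}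
    (hX : ∀ H ∈ U ∩ shiftSet V 1, ∀ m : ℤ, m < 0 → ∀ f : X ⟶ H⟦m⟧, f = 0) : X ∈ U := by
  -- Induction on the width `n` of `Z`: truncating `Z⟦1⟧` splits it into a heart object and an
  -- object of width `n`.
  suffices key : ∀ n : ℕ, ∀ Z ∈ V, Z⟦(n : ℤ)⟧ ∈ U → ∀ k : ℤ, k ≤ 0 → ∀ f : X ⟶ Z⟦k⟧, f = 0 by
    refine t.mem_aisle_iff.2 fun Z hZ => ?_
    obtain ⟨n, hn⟩ := t.exists_shift_mem_aisle Z
    exact (forall_eq_zero_congr ((Iso.refl X).homCongr ((shiftFunctorZero C ℤ).app Z))).1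
      (key n Z hZ hn 0 le_rfl)
  intro n
  induction n with
  | zero =>
    intro Z hZV hZU k _ f
    have hZ : IsZero Z := t.isZero_of_mem_aisle_of_mem_coaisle
      (t.mem_aisle_of_iso ((shiftFunctorZero C ℤ).app Z).symm hZU) hZV
    exact ((shiftFunctor C k).map_isZero hZ).eq_of_tgt _ _
  | succ n ih =>
    intro Z hZV hZU k hk
    obtain ⟨A, B, hA, hB, a, b, c, hT⟩ := t.2.1 (Z⟦(1 : ℤ)⟧)
    have hAH : A ∈ U ∩ shiftSet V 1 := ⟨hA, (mem_shiftSet_iff t.mem_coaisle_of_iso).2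
      (t.shift_mem_coaisle_of_distTriang hT hB (by norm_num)
        (t.mem_coaisle_of_iso (shiftShiftNeg Z 1) hZV))⟩
    have hBU : B⟦(n : ℤ)⟧ ∈ U := t.shift_mem_aisle_of_distTriang hT hA (by omega)
      (t.mem_aisle_of_iso ((shiftFunctorAdd' C 1 (n : ℤ) _ (by push_cast; ring)).app Z).symm hZU)
    refine (forall_eq_zero_congr
      ((Iso.refl X).homCongr ((shiftFunctorAdd' C 1 (k - 1) k (by ring)).app Z))).2 ?_
    refine (forall_shift_eq_zero_iff (1 - k) (k - 1) (by ring)).1 ?_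
    exact forall_hom_to_obj₂_eq_zero hT
      ((forall_shift_eq_zero_iff (1 - k) (k - 1) (by ring)).2 (hX A hAH (k - 1) (by omega)))
      ((forall_shift_eq_zero_iff (1 - k) (k - 1) (by ring)).2 (ih B hB hBU (k - 1) (by omega)))

theorem mem_coaisle_of_forall_heart (t : IsBoundedTStructure U V) {Z : C}
    (hZ : ∀ H ∈ U ∩ shiftSet V 1, ∀ m : ℤ, 0 ≤ m → ∀ f : H⟦m⟧ ⟶ Z, f = 0) : Z ∈ V := by
  suffices key : ∀ n : ℕ, ∀ X ∈ U, X⟦-(n : ℤ)⟧ ∈ V → ∀ k : ℤ, 0 ≤ k → ∀ f : X⟦k⟧ ⟶ Z, f = 0 by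
    refine t.mem_coaisle_iff.2 fun X hX => ?_
    obtain ⟨n, hn⟩ := t.exists_shift_mem_coaisle X
    exact (forall_eq_zero_congr (((shiftFunctorZero C ℤ).app X).homCongr (Iso.refl Z))).1
      (key n X hX hn 0 le_rfl)
  intro n
  induction n with
  | zero =>
    intro X hXU hXV k _ f
    rw [Nat.cast_zero, neg_zero] at hXV
    have hX : IsZero X := t.isZero_of_mem_aisle_of_mem_coaisle hXU
      (t.mem_coaisle_of_iso ((shiftFunctorZero C ℤ).app X).symm hXV)
    exact ((shiftFunctor C k).map_isZero hX).eq_of_src _ _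
  | succ n ih =>
    intro X hXU hXV k hk
    obtain ⟨A, B, hA, hB, a, b, c, hT⟩ := t.2.1 (X⟦(-1 : ℤ)⟧)
    have hBH : B⟦(1 : ℤ)⟧ ∈ U ∩ shiftSet V 1 :=
      ⟨t.shift_mem_aisle_of_distTriang hT hA (by norm_num)
        (t.mem_aisle_of_iso (shiftNegShift X 1) hXU), B, hB, ⟨Iso.refl _⟩⟩
    have hAV : A⟦-(n : ℤ)⟧ ∈ V := t.shift_mem_coaisle_of_distTriang hT hB (by omega)
      (t.mem_coaisle_of_iso
        ((shiftFunctorAdd' C (-1) (-(n : ℤ)) _ (by push_cast; ring)).app X).symm hXV)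
    refine (forall_eq_zero_congr
      (((shiftFunctorAdd' C (-1) (k + 1) k (by ring)).app X).homCongr (Iso.refl Z))).2 ?_
    refine (forall_shift_eq_zero_iff (k + 1) (-(k + 1)) (by ring)).2 ?_
    exact forall_hom_from_obj₂_eq_zero hT
      ((forall_shift_eq_zero_iff (k + 1) (-(k + 1)) (by ring)).1 (ih A hA hAV (k + 1) (by omega)))
      ((forall_shift_eq_zero_iff (k + 1) (-(k + 1)) (by ring)).1
        ((forall_eq_zero_congr
          (((shiftFunctorAdd' C 1 k (k + 1) (by ring)).app B).homCongr (Iso.refl Z))).2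
          (hZ _ hBH k hk)))

end IsBoundedTStructure

def SiltingLE (P Q : C) : Prop :=
  ∀ i : ℤ, 0 < i → ∀ f : Q ⟶ P⟦i⟧, f = 0

def HeartLE (ℋ' ℋ : Set C) : Prop :=
  ∀ X ∈ ℋ', ∀ Y ∈ ℋ, ∀ i : ℤ, i < 0 → ∀ f : X ⟶ Y⟦i⟧, f = 0

theorem mem_siltAisle_iff {P X : C} : X ∈ siltAisle P ↔ SiltingLE X P :=
  ⟨fun h n hn => (forall_shift_eq_zero_iff (-n) n (by ring)).1 (h (-n) (by omega)),
    fun h i hi => (forall_shift_eq_zero_iff i (-i) (by ring)).2 (h (-i) (by omega))⟩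

theorem shift_mem_siltAisle_of_siltingLE {P Q : C} (h : SiltingLE P Q) {n : ℤ} (hn : 0 ≤ n) :
    P⟦n⟧ ∈ siltAisle Q := fun i hi =>
  (forall_shift_shift_eq_zero_iff i n (n - i) (by ring)).2 (h (n - i) (by omega))

theorem siltCoaisle_subset_of_siltingLE {P Q : C}
    (tQ : IsBoundedTStructure (siltAisle Q) (siltCoaisle Q)) (h : SiltingLE P Q) :
    siltCoaisle Q ⊆ siltCoaisle P := fun _ hZ _ hi =>
  tQ.hom_eq_zero (shift_mem_siltAisle_of_siltingLE h hi) hZ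

theorem heartLE_of_siltingLE {P Q : C}
    (tP : IsBoundedTStructure (siltAisle P) (siltCoaisle P))
    (tQ : IsBoundedTStructure (siltAisle Q) (siltCoaisle Q)) (h : SiltingLE P Q) :
    HeartLE (siltHeart P) (siltHeart Q) := fun _ hX _ hY _ hi =>
  tP.hom_eq_zero hX.1
    (siltCoaisle_subset_of_siltingLE tQ h (tQ.shift_mem_coaisle_of_mem_shiftSet hY.2 hi))

theorem siltingLE_of_heartLE {P Q : C} (hP : SiltingLE P P)
    (tP : IsBoundedTStructure (siltAisle P) (siltCoaisle P))
    (tQ : IsBoundedTStructure (siltAisle Q) (siltCoaisle Q))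
    (h : HeartLE (siltHeart P) (siltHeart Q)) : SiltingLE P Q := by
  refine mem_siltAisle_iff.1 (tQ.mem_aisle_of_forall_heart fun H hH m hm => ?_)
  refine tP.hom_eq_zero (mem_siltAisle_iff.2 hP) (tP.mem_coaisle_of_forall_heart ?_)
  exact fun H' hH' m' hm' => (forall_shift_shift_eq_zero_iff m' m (m - m') (by ring)).2
    (h H' hH' H hH (m - m') (by omega))

theorem siltHeart_eq_of_siltCoaisle_eq {P Q : C}
    (tP : IsBoundedTStructure (siltAisle P) (siltCoaisle P))
    (tQ : IsBoundedTStructure (siltAisle Q) (siltCoaisle Q))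
    (h : siltCoaisle P = siltCoaisle Q) : siltHeart P = siltHeart Q := by
  have hU : siltAisle P = siltAisle Q := by
    rw [tP.2.2.2.1, tQ.2.2.2.1, h]
  rw [siltHeart, siltHeart, hU, h]

theorem silting_heart_poset_isomorphism_general (𝒰 : Set C)
    (hsilt : ∀ P : C, IsSilting 𝒰 P → IsBoundedTStructure (siltAisle P) (siltCoaisle P)) :
    ∀ P Q : C, IsSilting 𝒰 P → IsSilting 𝒰 Q →
      (((∀ i : ℤ, 0 < i → ∀ f : Q ⟶ P⟦i⟧, f = 0) ↔
        (∀ X ∈ siltHeart P, ∀ Y ∈ siltHeart Q, ∀ i : ℤ, i < 0 → ∀ f : X ⟶ Y⟦i⟧, f = 0)) ∧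
      (siltHeart P = siltHeart Q ↔
        ((∀ i : ℤ, 0 < i → ∀ f : Q ⟶ P⟦i⟧, f = 0) ∧
         (∀ i : ℤ, 0 < i → ∀ f : P ⟶ Q⟦i⟧, f = 0)))) := by
  intro P Q hP hQ
  have tP := hsilt P hP
  have tQ := hsilt Q hQ
  have hPP : HeartLE (siltHeart P) (siltHeart P) := heartLE_of_siltingLE tP tP hP.1
  have hQQ : HeartLE (siltHeart Q) (siltHeart Q) := heartLE_of_siltingLE tQ tQ hQ.1
  refine ⟨⟨heartLE_of_siltingLE tP tQ, siltingLE_of_heartLE hP.1 tP tQ⟩, ?_, ?_⟩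
  · intro hPQ
    exact ⟨siltingLE_of_heartLE hP.1 tP tQ (hPQ ▸ hPP),
      siltingLE_of_heartLE hQ.1 tQ tP (hPQ ▸ hQQ)⟩
  · rintro ⟨hle, hge⟩
    exact siltHeart_eq_of_siltCoaisle_eq tP tQ (subset_antisymm
      (siltCoaisle_subset_of_siltingLE tP hge) (siltCoaisle_subset_of_siltingLE tQ hle))

/-- Under the assumption that every silting object `P` of a thick subcategory `𝒰` of `T`
induces a bounded t-structure `T = P[<0]^⊥ ⊥ P[≥0]^⊥`, the map `P ↦ ℋ_P` sending a silting
object to its silting heart is a poset isomorphism from `silt 𝒰` (ordered by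
`Q ≥ P ⟺ Hom(Q, P[>0]) = 0`) onto the set of silting hearts (ordered by
`ℋ ≥ ℋ' ⟺ Hom(ℋ', ℋ[<0]) = 0`): it is order-preserving and order-reflecting, and two
silting objects have the same heart exactly when they are equivalent in the silting order. -/
theorem silting_heart_poset_isomorphism (𝒰 : Set C) (h𝒰 : IsThick 𝒰)
    (hsilt : ∀ P : C, IsSilting 𝒰 P → IsBoundedTStructure (siltAisle P) (siltCoaisle P)) :
    ∀ P Q : C, IsSilting 𝒰 P → IsSilting 𝒰 Q →
      (((∀ i : ℤ, 0 < i → ∀ f : Q ⟶ P⟦i⟧, f = 0) ↔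
        (∀ X ∈ siltHeart P, ∀ Y ∈ siltHeart Q, ∀ i : ℤ, i < 0 → ∀ f : X ⟶ Y⟦i⟧, f = 0)) ∧
      (siltHeart P = siltHeart Q ↔
        ((∀ i : ℤ, 0 < i → ∀ f : Q ⟶ P⟦i⟧, f = 0) ∧
         (∀ i : ℤ, 0 < i → ∀ f : P ⟶ Q⟦i⟧, f = 0)))) :=
  silting_heart_poset_isomorphism_general 𝒰 hsilt
end

section
/- Let H be a hereditary finite-dimensional algebra, D = D^b(mod H), d ≥ 1, and let S, T be simple-minded collections of D with associated t-structures (D_S^{≤0}, D_S^{≥1}) and (D_T^{≤0}, D_T^{≥1}) and hearts ℋ_S = Filt(S), ℋ_T = Filt(T). Then the following are equivalent: (1) ℋ_S ⊆ D_T^{≤0} ∩ ν D_T^{≥1−d}; (2) ℋ_T ⊆ ν^{−1} D_S^{≤d−1} ∩ D_S^{≥0}; (3) D_S^{≤0} ⊆ D_T^{≤0} and D_S^{≥0} ⊆ ν D_T^{≥1−d}; (4) D_T^{≤0} ⊆ ν^{−1} D_S^{≤d−1} and D_T^{≥0} ⊆ D_S^{≥0}. -/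
open CategoryTheory CategoryTheory.Limits CategoryTheory.Pretriangulated

universe v u

variable {C : Type u} [Category.{v} C] [Preadditive C] [HasZeroObject C]
  [HasShift C ℤ] [∀ n : ℤ, (shiftFunctor C n).Additive] [Pretriangulated C]

/-- A class of objects is "Filt-closed" if it contains the zero objects and is closed
under isomorphisms and extensions. -/
def IsFiltClosed (P : Set C) : Prop :=
  (∀ X : C, Limits.IsZero X → X ∈ P) ∧
  (∀ X Y : C, (X ≅ Y) → X ∈ P → Y ∈ P) ∧
  (∀ T ∈ distTriang C, T.obj₁ ∈ P → T.obj₃ ∈ P → T.obj₂ ∈ P)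

/-- `Filt S`: the smallest extension-closed strictly full subcategory containing `S`. -/
def Filt (S : Set C) : Set C :=
  ⋂₀ {P : Set C | S ⊆ P ∧ IsFiltClosed P}

/-- A simple-minded collection (SMC) in a triangulated category: each object has a
division ring of endomorphisms, distinct objects have no morphisms between them,
`Hom(X[i], Y) = 0` for `i > 0`, and `S` generates the category as a thick subcategory. -/
def IsSMC (S : Set C) : Prop :=
  (∀ X ∈ S, ¬ Limits.IsZero X ∧ ∀ f : X ⟶ X, f ≠ 0 → IsIso f) ∧
  (∀ X ∈ S, ∀ Y ∈ S, X ≠ Y → ∀ f : X ⟶ Y, f = 0) ∧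
  (∀ X ∈ S, ∀ Y ∈ S, ∀ i : ℤ, 0 < i → ∀ f : X⟦i⟧ ⟶ Y, f = 0) ∧
  thickClosure S = Set.univ

/-- `D_S^{≤ n} = Filt(S[i] : i ≥ -n)`, the aisle of the t-structure associated to
the simple-minded collection `S`. -/
def DSle (S : Set C) (n : ℤ) : Set C :=
  Filt {X : C | ∃ Y ∈ S, ∃ i : ℤ, -n ≤ i ∧ Nonempty (X ≅ Y⟦i⟧)}

/-- `D_S^{≥ n} = Filt(S[i] : i ≤ -n)`, the coaisle of the t-structure associated to
the simple-minded collection `S`. -/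
def DSge (S : Set C) (n : ℤ) : Set C :=
  Filt {X : C | ∃ Y ∈ S, ∃ i : ℤ, i ≤ -n ∧ Nonempty (X ≅ Y⟦i⟧)}

/-- The essential image of a class of objects under a functor. -/
def imageSet (F : C ⥤ C) (S : Set C) : Set C :=
  {X : C | ∃ Y ∈ S, Nonempty (X ≅ F.obj Y)}

/-!
For a simple-minded collection `S`, each level `D_S^{≤n}`, `D_S^{≥n}` is a shift of level `0`,
and the t-structure axioms make `D_S^{≥1}` the right orthogonal of `D_S^{≤0}` and `D_S^{≤0}` the
left orthogonal of `D_S^{≥1}`. Hence an aisle inclusion `D_S^{≤0} ⊆ D_T^{≤0}` is the reverse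
coaisle inclusion, and, since `Hom(νX, Y) ≅ Hom(X, ν⁻¹Y)`, the inclusion `ν D_T^{≤-d} ⊆ D_S^{≤-1}`
is equivalent to `ν⁻¹ D_S^{≥0} ⊆ D_T^{≥1-d}`; after shifting levels this is (3) ⇔ (4).
As `D_S^{≤0}` (resp. `D_S^{≥0}`) is the extension closure of the nonnegative (resp. nonpositive)
shifts of `S`, it lies in a class closed under extensions and those shifts as soon as the heart
`Filt S` does; this is (1) ⇔ (3) and (2) ⇔ (4).
-/

open Set

section IsoClosed

variable {C : Type*} [Category C]

def IsIsoClosed (P : Set C) : Prop :=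
  ∀ X Y : C, (X ≅ Y) → X ∈ P → Y ∈ P

lemma imageSet_functor_eq_preimage (E : C ≌ C) {P : Set C} (hP : IsIsoClosed P) :
    imageSet E.functor P = E.inverse.obj ⁻¹' P := by
  ext X
  refine ⟨fun ⟨Y, hY, ⟨e⟩⟩ => hP _ _ (E.unitIso.app Y ≪≫ E.inverse.mapIso e.symm) hY,
    fun h => ⟨_, h, ⟨(E.counitIso.app X).symm⟩⟩⟩

lemma imageSet_inverse_eq_preimage (E : C ≌ C) {P : Set C} (hP : IsIsoClosed P) :
    imageSet E.inverse P = E.functor.obj ⁻¹' P :=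
  imageSet_functor_eq_preimage E.symm hP

end IsoClosed

section Orthogonal

variable {C D : Type*} [Category C] [Category D] [HasZeroMorphisms C] [HasZeroMorphisms D]

def rightOrth (U : Set C) : Set C :=
  {X | ∀ A ∈ U, ∀ f : A ⟶ X, f = 0}

def leftOrth (V : Set C) : Set C :=
  {Y | ∀ B ∈ V, ∀ f : Y ⟶ B, f = 0}

lemma isIsoClosed_rightOrth (U : Set C) : IsIsoClosed (rightOrth U) :=
  fun _ _ e hX A hA f => by
    rw [← cancel_mono e.inv, zero_comp]
    exact hX A hA _

lemma isIsoClosed_leftOrth (V : Set C) : IsIsoClosed (leftOrth V) :=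
  fun _ _ e hX B hB f => by
    rw [← cancel_epi e.hom, comp_zero]
    exact hX B hB _

lemma subset_preimage_leftOrth_iff (E : C ≌ D) (U : Set C) (V : Set D) :
    U ⊆ E.functor.obj ⁻¹' leftOrth V ↔ V ⊆ E.inverse.obj ⁻¹' rightOrth U := by
  have hom_eq_zero_iff : ∀ X Y, (∀ f : E.functor.obj X ⟶ Y, f = 0) ↔
      ∀ g : X ⟶ E.inverse.obj Y, g = 0 := fun X Y =>
    have hzero : E.toAdjunction.homEquiv X Y 0 = 0 := by simp [Adjunction.homEquiv_unit]
    (E.toAdjunction.homEquiv X Y).forall_congr fun f => by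
      rw [← hzero, Equiv.apply_eq_iff_eq]
  simp only [subset_def, mem_preimage, leftOrth, rightOrth, mem_ofPred_eq, hom_eq_zero_iff]
  exact forall₂_comm

lemma preimage_rightOrth (E : C ≌ D) {U : Set D} (hU : IsIsoClosed U) :
    E.functor.obj ⁻¹' rightOrth U = rightOrth (E.functor.obj ⁻¹' U) := by
  ext X
  refine ⟨fun h B hB f => (E.functor.map_eq_zero_iff).1 (h _ hB _), fun h A hA g => ?_⟩
  let e := E.counitIso.app A
  rw [← cancel_epi e.hom, comp_zero, ← E.functor.map_preimage (e.hom ≫ g),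
    h _ (hU _ _ e.symm hA) (E.functor.preimage _), Functor.map_zero]

lemma preimage_leftOrth (E : C ≌ D) {V : Set D} (hV : IsIsoClosed V) :
    E.functor.obj ⁻¹' leftOrth V = leftOrth (E.functor.obj ⁻¹' V) := by
  ext X
  refine ⟨fun h B hB f => (E.functor.map_eq_zero_iff).1 (h _ hB _), fun h A hA g => ?_⟩
  let e := E.counitIso.app A
  rw [← cancel_mono e.inv, zero_comp, ← E.functor.map_preimage (g ≫ e.inv),
    h _ (hV _ _ e.symm hA) (E.functor.preimage _), Functor.map_zero]

end Orthogonal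

section ShiftCompatible

variable {C D : Type*} [Category C] [Category D] [HasShift C ℤ] [HasShift D ℤ]

structure IsShiftCompatible (P : ℤ → Set C) : Prop where
  isIsoClosed (n : ℤ) : IsIsoClosed (P n)
  shift_mem_iff (a k : ℤ) (X : C) : X⟦k⟧ ∈ P a ↔ X ∈ P (a + k)

namespace IsShiftCompatible

variable {P Q : ℤ → Set C}

lemma subset_shift (hP : IsShiftCompatible P) (hQ : IsShiftCompatible Q) {a b : ℤ}
    (h : P a ⊆ Q b) (k : ℤ) : P (a + k) ⊆ Q (b + k) :=
  fun X hX => (hQ.shift_mem_iff b k X).1 (h ((hP.shift_mem_iff a k X).2 hX))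

lemma subset_iff (hP : IsShiftCompatible P) (hQ : IsShiftCompatible Q) {a b a' b' : ℤ}
    (h : a' - a = b' - b) : P a ⊆ Q b ↔ P a' ⊆ Q b' := by
  obtain ⟨k, rfl, rfl⟩ : ∃ k, a' = a + k ∧ b' = b + k := ⟨a' - a, by omega, by omega⟩
  refine ⟨fun h => hP.subset_shift hQ h k, fun h => ?_⟩
  simpa using hP.subset_shift hQ h (-k)

lemma eq_iff (hP : IsShiftCompatible P) (hQ : IsShiftCompatible Q) {a b a' b' : ℤ}
    (h : a' - a = b' - b) : P a = Q b ↔ P a' = Q b' := by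
  rw [Subset.antisymm_iff, Subset.antisymm_iff, hP.subset_iff hQ h,
    hQ.subset_iff hP (a := b) (b := a) (a' := b') (b' := a') (by omega)]

lemma preimage (hP : IsShiftCompatible P) (F : D ⥤ C) [F.CommShift ℤ] :
    IsShiftCompatible (fun n => F.obj ⁻¹' P n) where
  isIsoClosed n _ _ e hX := hP.isIsoClosed n _ _ (F.mapIso e) hX
  shift_mem_iff a k X :=
    ⟨fun h => (hP.shift_mem_iff a k _).1 (hP.isIsoClosed a _ _ ((F.commShiftIso k).app X) h),
      fun h => hP.isIsoClosed a _ _ ((F.commShiftIso k).app X).symm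
        ((hP.shift_mem_iff a k _).2 h)⟩

lemma preimage_inverse (hP : IsShiftCompatible P) (E : C ≌ D) [E.functor.CommShift ℤ] :
    IsShiftCompatible (fun n => E.inverse.obj ⁻¹' P n) := by
  let := E.commShiftInverse ℤ
  exact hP.preimage E.inverse

variable [HasZeroMorphisms C]

lemma rightOrth (hP : IsShiftCompatible P) :
    IsShiftCompatible (fun n => rightOrth (P n)) where
  isIsoClosed n := isIsoClosed_rightOrth (P n)
  shift_mem_iff a k X := by
    have hshift : (shiftEquiv C k).functor.obj ⁻¹' P a = P (a + k) :=
      Set.ext (hP.shift_mem_iff a k)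
    rw [← hshift, ← preimage_rightOrth (shiftEquiv C k) (hP.isIsoClosed a)]
    rfl

lemma leftOrth (hP : IsShiftCompatible P) :
    IsShiftCompatible (fun n => leftOrth (P n)) where
  isIsoClosed n := isIsoClosed_leftOrth (P n)
  shift_mem_iff a k X := by
    have hshift : (shiftEquiv C k).functor.obj ⁻¹' P a = P (a + k) :=
      Set.ext (hP.shift_mem_iff a k)
    rw [← hshift, ← preimage_leftOrth (shiftEquiv C k) (hP.isIsoClosed a)]
    rfl

end IsShiftCompatible

/-- `DSle S n` and `DSge S n` are definitionally `Filt (shiftsOf S (-n ≤ ·))` and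
`Filt (shiftsOf S (· ≤ -n))`. -/
def shiftsOf (S : Set C) (p : ℤ → Prop) : Set C :=
  {X | ∃ Y ∈ S, ∃ i, p i ∧ Nonempty (X ≅ Y⟦i⟧)}

lemma shiftsOf_mono {S : Set C} {p q : ℤ → Prop} (h : ∀ i, p i → q i) :
    shiftsOf S p ⊆ shiftsOf S q :=
  fun _ ⟨Y, hY, i, hi, e⟩ => ⟨Y, hY, i, h i hi, e⟩

end ShiftCompatible

section Filt

variable {D : Type*} [Category D] [Preadditive D] [HasZeroObject D]
  [HasShift D ℤ] [∀ n : ℤ, (shiftFunctor D n).Additive] [Pretriangulated D]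

lemma subset_filt (S : Set C) : S ⊆ Filt S :=
  fun _ hX => mem_sInter.2 fun _ hP => hP.1 hX

lemma filt_subset {S P : Set C} (hSP : S ⊆ P) (hP : IsFiltClosed P) : Filt S ⊆ P :=
  fun _ hX => mem_sInter.1 hX P ⟨hSP, hP⟩

lemma isFiltClosed_filt (S : Set C) : IsFiltClosed (Filt S) :=
  ⟨fun X hX => mem_sInter.2 fun _ hP => hP.2.1 X hX,
    fun X Y e hX => mem_sInter.2 fun P hP => hP.2.2.1 X Y e (mem_sInter.1 hX P hP),
    fun T hT h₁ h₃ => mem_sInter.2 fun P hP =>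
      hP.2.2.2 T hT (mem_sInter.1 h₁ P hP) (mem_sInter.1 h₃ P hP)⟩

lemma filt_mono {S S' : Set C} (h : S ⊆ S') : Filt S ⊆ Filt S' :=
  filt_subset (h.trans (subset_filt S')) (isFiltClosed_filt S')

lemma IsFiltClosed.preimage {P : Set D} (hP : IsFiltClosed P) (F : C ⥤ D) [F.CommShift ℤ]
    [F.IsTriangulated] : IsFiltClosed (F.obj ⁻¹' P) :=
  ⟨fun _ hX => hP.1 _ (F.map_isZero hX), fun _ _ e hX => hP.2.1 _ _ (F.mapIso e) hX,
    fun T hT h₁ h₃ => hP.2.2 _ (F.map_distinguished T hT) h₁ h₃⟩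

lemma IsFiltClosed.preimage_inverse {P : Set D} (hP : IsFiltClosed P) (E : D ≌ C)
    [E.functor.CommShift ℤ] [E.functor.IsTriangulated] :
    IsFiltClosed (E.inverse.obj ⁻¹' P) := by
  let := E.commShiftInverse ℤ
  have := E.commShift_of_functor ℤ
  have := E.toAdjunction.isTriangulated_rightAdjoint
  exact hP.preimage E.inverse

lemma IsFiltClosed.preimage_shift {P : Set C} (hP : IsFiltClosed P) (k : ℤ) :
    IsFiltClosed ((shiftFunctor C k).obj ⁻¹' P) :=
  ⟨fun _ hX => hP.1 _ ((shiftFunctor C k).map_isZero hX),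
    fun _ _ e hX => hP.2.1 _ _ ((shiftFunctor C k).mapIso e) hX,
    fun T hT h₁ h₃ => hP.2.2 _ (Triangle.shift_distinguished T hT k) h₁ h₃⟩

lemma shift_mem_filt_shiftsOf {S : Set C} {p q : ℤ → Prop} (k : ℤ)
    (hpq : ∀ i, p i → q (i + k)) {X : C} (hX : X ∈ Filt (shiftsOf S p)) :
    X⟦k⟧ ∈ Filt (shiftsOf S q) := by
  refine filt_subset ?_ ((isFiltClosed_filt _).preimage_shift k) hX
  rintro _ ⟨Y, hY, i, hi, ⟨e⟩⟩
  exact subset_filt _ ⟨Y, hY, i + k, hpq i hi,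
    ⟨(shiftFunctor C k).mapIso e ≪≫ ((shiftFunctorAdd C i k).app Y).symm⟩⟩

lemma isShiftCompatible_filt_shiftsOf (S : Set C) (p : ℤ → ℤ → Prop)
    (hp : ∀ a k i, p (a + k) i ↔ p a (i + k)) :
    IsShiftCompatible (fun a => Filt (shiftsOf S (p a))) where
  isIsoClosed a := (isFiltClosed_filt _).2.1
  shift_mem_iff a k X := by
    refine ⟨fun h => (isFiltClosed_filt _).2.1 _ _ (shiftShiftNeg X k) ?_,
      shift_mem_filt_shiftsOf k fun i => (hp a k i).1⟩
    exact shift_mem_filt_shiftsOf (-k) (fun i hi => (hp a k _).2 (by simpa using hi)) h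

lemma filt_shiftsOf_subset_iff {S Q : Set C} {p : ℤ → Prop} (hQ : IsFiltClosed Q) (hp : p 0)
    (hpQ : ∀ i, p i → ∀ X ∈ Q, X⟦i⟧ ∈ Q) : Filt (shiftsOf S p) ⊆ Q ↔ Filt S ⊆ Q := by
  refine ⟨fun h => (filt_subset ?_ (isFiltClosed_filt _)).trans h, fun h => filt_subset ?_ hQ⟩
  · exact fun Y hY => subset_filt _ ⟨Y, hY, 0, hp, ⟨((shiftFunctorZero C ℤ).app Y).symm⟩⟩
  · rintro X ⟨Y, hY, i, hi, ⟨e⟩⟩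
    exact hQ.2.1 _ _ e.symm (hpQ i hi Y (h (subset_filt S hY)))

lemma isShiftCompatible_DSle (S : Set C) : IsShiftCompatible (DSle S) :=
  isShiftCompatible_filt_shiftsOf S (fun a i => -a ≤ i) (by intros; omega)

lemma isShiftCompatible_DSge (S : Set C) : IsShiftCompatible (DSge S) :=
  isShiftCompatible_filt_shiftsOf S (fun a i => i ≤ -a) (by intros; omega)

lemma DSle_mono (S : Set C) : Monotone (DSle S) :=
  fun _ _ h => filt_mono (shiftsOf_mono fun _ _ => by omega)

lemma DSge_anti (S : Set C) : Antitone (DSge S) :=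
  fun _ _ h => filt_mono (shiftsOf_mono fun _ _ => by omega)

lemma DSle_zero_subset_iff {S : Set C} {Q : ℤ → Set C} (hQ : IsShiftCompatible Q)
    (hmono : Monotone Q) {b : ℤ} (hQb : IsFiltClosed (Q b)) :
    DSle S 0 ⊆ Q b ↔ Filt S ⊆ Q b :=
  filt_shiftsOf_subset_iff hQb le_rfl fun i hi X hX =>
    (hQ.shift_mem_iff b i X).2 (hmono (by omega) hX)

lemma DSge_zero_subset_iff {S : Set C} {Q : ℤ → Set C} (hQ : IsShiftCompatible Q)
    (hanti : Antitone Q) {b : ℤ} (hQb : IsFiltClosed (Q b)) :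
    DSge S 0 ⊆ Q b ↔ Filt S ⊆ Q b :=
  filt_shiftsOf_subset_iff hQb le_rfl fun i hi X hX =>
    (hQ.shift_mem_iff b i X).2 (hanti (by omega) hX)

end Filt

lemma IsBoundedTStructure.subset_iff {U V U' V' : Set C} (h : IsBoundedTStructure U V)
    (h' : IsBoundedTStructure U' V') : U ⊆ U' ↔ V' ⊆ V := by
  rw [h'.2.2.2.1, h.2.2.1]
  exact subset_preimage_leftOrth_iff CategoryTheory.Equivalence.refl U V'

lemma DSle_subset_iff_DSge_subset {S T : Set C}
    (hS : IsBoundedTStructure (DSle S 0) (DSge S 1))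
    (hT : IsBoundedTStructure (DSle T 0) (DSge T 1)) :
    DSle S 0 ⊆ DSle T 0 ↔ DSge T 0 ⊆ DSge S 0 :=
  (hS.subset_iff hT).trans
    ((isShiftCompatible_DSge T).subset_iff (isShiftCompatible_DSge S) (by norm_num))

lemma DSge_subset_preimage_iff (ν : C ≌ C) [ν.functor.CommShift ℤ] {S T : Set C}
    (hS : IsBoundedTStructure (DSle S 0) (DSge S 1))
    (hT : IsBoundedTStructure (DSle T 0) (DSge T 1)) (d : ℤ) :
    DSge S 0 ⊆ ν.inverse.obj ⁻¹' DSge T (1 - d) ↔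
      DSle T 0 ⊆ ν.functor.obj ⁻¹' DSle S (d - 1) := by
  have hS_le : DSle S (-1) = leftOrth (DSge S 0) :=
    ((isShiftCompatible_DSle S).eq_iff (isShiftCompatible_DSge S).leftOrth (by norm_num)).1
      hS.2.2.2.1
  have hT_ge : DSge T (1 - d) = rightOrth (DSle T (-d)) :=
    ((isShiftCompatible_DSge T).eq_iff (isShiftCompatible_DSle T).rightOrth (by ring)).1
      hT.2.2.1
  rw [hT_ge, ← subset_preimage_leftOrth_iff, ← hS_le]
  exact (isShiftCompatible_DSle T).subset_iff ((isShiftCompatible_DSle S).preimage ν.functor)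
    (by ring)

theorem smc_heart_inclusions_tfae_general
    (ν : C ≌ C) [ν.functor.CommShift ℤ] [ν.functor.IsTriangulated]
    (htstr : ∀ U : Set C, IsSMC U → IsBoundedTStructure (DSle U 0) (DSge U 1))
    (d : ℤ) (S T : Set C) (hS : IsSMC S) (hT : IsSMC T) :
    [Filt S ⊆ DSle T 0 ∩ imageSet ν.functor (DSge T (1 - d)),
     Filt T ⊆ imageSet ν.inverse (DSle S (d - 1)) ∩ DSge S 0,
     DSle S 0 ⊆ DSle T 0 ∧ DSge S 0 ⊆ imageSet ν.functor (DSge T (1 - d)),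
     DSle T 0 ⊆ imageSet ν.inverse (DSle S (d - 1)) ∧ DSge T 0 ⊆ DSge S 0].TFAE := by
  rw [imageSet_functor_eq_preimage ν ((isShiftCompatible_DSge T).isIsoClosed _),
    imageSet_inverse_eq_preimage ν ((isShiftCompatible_DSle S).isIsoClosed _)]
  tfae_have 1 ↔ 3 := by
    rw [subset_inter_iff,
      DSle_zero_subset_iff (isShiftCompatible_DSle T) (DSle_mono T) (isFiltClosed_filt _),
      DSge_zero_subset_iff ((isShiftCompatible_DSge T).preimage_inverse ν)
        (monotone_preimage.comp_antitone (DSge_anti T))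
        ((isFiltClosed_filt _).preimage_inverse ν)]
  tfae_have 2 ↔ 4 := by
    rw [subset_inter_iff,
      DSle_zero_subset_iff ((isShiftCompatible_DSle S).preimage ν.functor)
        (monotone_preimage.comp (DSle_mono S)) ((isFiltClosed_filt _).preimage ν.functor),
      DSge_zero_subset_iff (isShiftCompatible_DSge S) (DSge_anti S) (isFiltClosed_filt _)]
  tfae_have 3 ↔ 4 :=
    (and_congr (DSle_subset_iff_DSge_subset (htstr S hS) (htstr T hT))
      (DSge_subset_preimage_iff ν (htstr S hS) (htstr T hT) d)).trans and_comm
  tfae_finish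

/-- Let `D` be the bounded derived category of a hereditary algebra (abstracted here as a
triangulated category in which every simple-minded collection generates a bounded
t-structure), with Nakayama autoequivalence `ν`, and let `d ≥ 1`. For simple-minded
collections `S, T` with hearts `ℋ_S = Filt S`, `ℋ_T = Filt T`, the following are
equivalent:
(1) `ℋ_S ⊆ D_T^{≤0} ∩ ν D_T^{≥1−d}`;
(2) `ℋ_T ⊆ ν⁻¹ D_S^{≤d−1} ∩ D_S^{≥0}`;
(3) `D_S^{≤0} ⊆ D_T^{≤0}` and `D_S^{≥0} ⊆ ν D_T^{≥1−d}`;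
(4) `D_T^{≤0} ⊆ ν⁻¹ D_S^{≤d−1}` and `D_T^{≥0} ⊆ D_S^{≥0}`. -/
theorem smc_heart_inclusions_tfae
    (ν : C ≌ C) [ν.functor.CommShift ℤ] [ν.functor.IsTriangulated]
    (htstr : ∀ U : Set C, IsSMC U → IsBoundedTStructure (DSle U 0) (DSge U 1))
    (d : ℤ) (hd : 1 ≤ d) (S T : Set C) (hS : IsSMC S) (hT : IsSMC T) :
    [Filt S ⊆ DSle T 0 ∩ imageSet ν.functor (DSge T (1 - d)),
     Filt T ⊆ imageSet ν.inverse (DSle S (d - 1)) ∩ DSge S 0,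
     DSle S 0 ⊆ DSle T 0 ∧ DSge S 0 ⊆ imageSet ν.functor (DSge T (1 - d)),
     DSle T 0 ⊆ imageSet ν.inverse (DSle S (d - 1)) ∧ DSge T 0 ⊆ DSge S 0].TFAE :=
  smc_heart_inclusions_tfae_general ν htstr d S T hS hT
end

section
/- Let T be a k-linear triangulated category with finite total Hom spaces, and let (X_1, …, X_n) be an exceptional sequence with left-mutated sequence (X_n^∨, …, X_1^∨) = μ⁺_rev(X_1, …, X_n). Then for all 1 ≤ s, t ≤ n and m ∈ ℤ, Hom_T(X_s, X_t^∨[m]) is a division ring if s = t and m = 0, and vanishes otherwise. -/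
/-!
Call `A` and `B` shift-orthogonal, `A ⊥ B`, when `Hom(A, B[m]) = 0` for all `m`. In either
variable this condition is stable under shifts, retracts and extensions, so it passes from `A` to
every object of `add(A[ℤ])`. Hence a left mutation `E → Y → Y' → E[1]` over `A` is invisible from
any `W ⊥ A`: the long exact sequence gives `Hom(W, Y[m]) ≅ Hom(W, Y'[m])`. Following the mutation
chains that produce the dual objects, induction on the index gives `X_j^∨ ⊥ X_t^∨` for `j < t`,
`X_s ⊥ X_t^∨` for `s ≠ t`, and `Hom(X_s, X_s[m]) ≅ Hom(X_s, X_s^∨[m])`, which vanishes for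
`m ≠ 0` by exceptionality.
-/

open CategoryTheory CategoryTheory.Limits CategoryTheory.Pretriangulated

universe v u u'

variable {C : Type u} [Category.{v} C] [Preadditive C] [HasZeroObject C]
  [HasShift C ℤ] [∀ n : ℤ, (shiftFunctor C n).Additive] [Pretriangulated C]

/-- `addShifts X`: the additive closure of all shifts of `X`, i.e. the smallest class
containing every `X⟦n⟧` and the zero objects, closed under isomorphisms, retracts
(direct summands), and finite direct sums (split extensions). -/
def addShifts (X : C) : Set C :=
  ⋂₀ {P : Set C | (∀ n : ℤ, X⟦n⟧ ∈ P) ∧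
    (∀ A : C, Limits.IsZero A → A ∈ P) ∧
    (∀ A B : C, (A ≅ B) → A ∈ P → B ∈ P) ∧
    (∀ A B : C, ∀ r : A ⟶ B, ∀ s : B ⟶ A, s ≫ r = 𝟙 B → A ∈ P → B ∈ P) ∧
    (∀ T ∈ distTriang C, T.mor₃ = 0 → T.obj₁ ∈ P → T.obj₃ ∈ P → T.obj₂ ∈ P)}

/-- `IsLeftMutation X Y Y'` : `Y'` is the left mutation of `Y` over the exceptional object
`X`, i.e. there is a distinguished triangle `E → Y → Y' → E[1]` (equivalently
`Y'[-1] → E → Y → Y'`) where `E = ⊕_i Hom(X[i], Y) ⊗ X[i]` lies in `add(X[ℤ])` and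
`Hom(X[n], Y') = 0` for all `n ∈ ℤ`. -/
def IsLeftMutation (X Y Y' : C) : Prop :=
  ∃ (E : C) (f : E ⟶ Y) (g : Y ⟶ Y') (h : Y' ⟶ E⟦(1 : ℤ)⟧),
    Triangle.mk f g h ∈ (distTriang C) ∧ E ∈ addShifts X ∧
    (∀ n : ℤ, ∀ u : X⟦n⟧ ⟶ Y', u = 0)

/-- `IsDualSeq X Y` : `Y = (X_n^∨, …, X_1^∨)` (recorded as `Y i = X_i^∨`) is the total
left mutation `μ⁺_rev(X_1, …, X_n)` of the exceptional sequence `X`: each `X_i^∨` is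
obtained from `X_i` by successively left-mutating over `X_1^∨, …, X_{i−1}^∨`. -/
def IsDualSeq {n : ℕ} (X Y : Fin n → C) : Prop :=
  ∀ i : Fin n, ∃ Z : ℕ → C, Z 0 = X i ∧
    (∀ j : Fin n, (j : ℕ) < (i : ℕ) → IsLeftMutation (Y j) (Z j) (Z (j + 1))) ∧
    Z (i : ℕ) = Y i

/-- An exceptional object: its endomorphism ring is a division ring and it has no
self-extensions in nonzero degrees. -/
def IsExceptional (X : C) : Prop :=
  (¬ Limits.IsZero X ∧ ∀ f : X ⟶ X, f ≠ 0 → IsIso f) ∧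
  (∀ i : ℤ, i ≠ 0 → ∀ f : X ⟶ X⟦i⟧, f = 0)

/-- An exceptional sequence `(X_1, …, X_n)`. -/
def IsExceptionalSeq {n : ℕ} (X : Fin n → C) : Prop :=
  (∀ i : Fin n, IsExceptional (X i)) ∧
  (∀ i j : Fin n, (j : ℕ) < (i : ℕ) → ∀ l : ℤ, ∀ f : X i ⟶ (X j)⟦l⟧, f = 0)

def ShiftOrthogonal (A B : C) : Prop := ∀ m : ℤ, ∀ f : A ⟶ B⟦m⟧, f = 0

lemma AddEquiv.forall_eq_zero {M N : Type*} [AddZeroClass M] [AddZeroClass N] (e : M ≃+ N)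
    (h : ∀ x : M, x = 0) (y : N) : y = 0 := by
  rw [← e.apply_symm_apply y, h (e.symm y), map_zero]

lemma bijective_rightComp_mor₂_of_distTriang {T : Triangle C}
    (hT : T ∈ distTriang C) {W : C} (h₁ : ∀ f : W ⟶ T.obj₁, f = 0)
    (h₁' : ∀ f : W ⟶ T.obj₁⟦(1 : ℤ)⟧, f = 0) :
    Function.Bijective (Preadditive.rightComp W T.mor₂) := by
  refine ⟨(injective_iff_map_eq_zero _).2 fun f hf => ?_, fun g => ?_⟩
  · obtain ⟨g, rfl⟩ := Triangle.coyoneda_exact₂ T hT f hf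
    rw [h₁ g, zero_comp]
  · obtain ⟨f, rfl⟩ := Triangle.coyoneda_exact₃ T hT g (h₁' _)
    exact ⟨f, rfl⟩

namespace ShiftOrthogonal

variable {A B W : C}

omit [HasZeroObject C] [∀ n : ℤ, (shiftFunctor C n).Additive] [Pretriangulated C] in
lemma eq_zero_of_shift_shift (h : ShiftOrthogonal A B) {m p : ℤ} (f : A ⟶ (B⟦m⟧)⟦p⟧) :
    f = 0 :=
  (Preadditive.IsIso.comp_right_eq_zero f
    ((shiftFunctorAdd' C m p (m + p) rfl).inv.app B)).1 (h _ _)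

omit [HasZeroObject C] [Pretriangulated C] in
lemma shift_left (h : ShiftOrthogonal A B) (l : ℤ) : ShiftOrthogonal (A⟦l⟧) B := fun _ f =>
  (shiftFunctor C (-l)).map_injective <| by
    rw [Functor.map_zero, ← Preadditive.IsIso.comp_left_eq_zero
      ((shiftFunctorCompIsoId C l (-l) (add_neg_cancel l)).inv.app A)]
    exact h.eq_zero_of_shift_shift _

omit [HasZeroObject C] [Pretriangulated C] in
lemma of_shift_left (h : ∀ l : ℤ, ∀ f : A⟦l⟧ ⟶ B, f = 0) : ShiftOrthogonal A B := fun m f =>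
  (shiftFunctor C (-m)).map_injective <| by
    rw [Functor.map_zero, ← Preadditive.IsIso.comp_right_eq_zero _
      ((shiftFunctorCompIsoId C m (-m) (add_neg_cancel m)).hom.app B)]
    exact h _ _

lemma nonempty_addEquiv_of_distTriang {T : Triangle C} (hT : T ∈ distTriang C)
    (h₁ : ShiftOrthogonal W T.obj₁) (m : ℤ) :
    Nonempty ((W ⟶ T.obj₂⟦m⟧) ≃+ (W ⟶ T.obj₃⟦m⟧)) :=
  ⟨AddEquiv.ofBijective _ <| bijective_rightComp_mor₂_of_distTriang
    (T := (Triangle.shiftFunctor C m).obj T) (Triangle.shift_distinguished T hT m) (h₁ m)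
    h₁.eq_zero_of_shift_shift⟩

omit [HasZeroObject C] [∀ n : ℤ, (shiftFunctor C n).Additive] [Pretriangulated C] in
lemma of_nonempty_addEquiv {B' : C} (h : ShiftOrthogonal W B)
    (e : ∀ m : ℤ, Nonempty ((W ⟶ B⟦m⟧) ≃+ (W ⟶ B'⟦m⟧))) : ShiftOrthogonal W B' := fun m =>
  (e m).some.forall_eq_zero (h m)

lemma of_distTriang_right {T : Triangle C} (hT : T ∈ distTriang C)
    (h₁ : ShiftOrthogonal W T.obj₁) (h₃ : ShiftOrthogonal W T.obj₃) : ShiftOrthogonal W T.obj₂ :=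
  h₃.of_nonempty_addEquiv fun m => (h₁.nonempty_addEquiv_of_distTriang hT m).map AddEquiv.symm

lemma of_distTriang_left {T : Triangle C} (hT : T ∈ distTriang C)
    (h₁ : ShiftOrthogonal T.obj₁ W) (h₃ : ShiftOrthogonal T.obj₃ W) : ShiftOrthogonal T.obj₂ W :=
  fun m f => by
    obtain ⟨g, rfl⟩ := Triangle.yoneda_exact₂ T hT f (h₁ m _)
    rw [h₃ m g, comp_zero]

omit [HasZeroObject C] [∀ n : ℤ, (shiftFunctor C n).Additive] [Pretriangulated C] in
lemma of_retract_right (h : ShiftOrthogonal W A) (r : A ⟶ B) (s : B ⟶ A) (hsr : s ≫ r = 𝟙 B) :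
    ShiftOrthogonal W B := fun m f =>
  calc f = f ≫ (shiftFunctor C m).map (s ≫ r) := by simp [hsr]
    _ = 0 := by rw [Functor.map_comp, ← Category.assoc, h m (f ≫ _), zero_comp]

omit [HasZeroObject C] [∀ n : ℤ, (shiftFunctor C n).Additive] [Pretriangulated C] in
lemma of_retract_left (h : ShiftOrthogonal A W) (r : A ⟶ B) (s : B ⟶ A) (hsr : s ≫ r = 𝟙 B) :
    ShiftOrthogonal B W := fun m f =>
  calc f = s ≫ r ≫ f := by rw [← Category.assoc, hsr, Category.id_comp]
    _ = 0 := by rw [h m (r ≫ f), comp_zero]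

lemma of_mem_addShifts_right (h : ShiftOrthogonal W A) {E : C} (hE : E ∈ addShifts A) :
    ShiftOrthogonal W E :=
  Set.mem_sInter.1 hE {B | ShiftOrthogonal W B}
    ⟨fun _ _ f => h.eq_zero_of_shift_shift f,
      fun _ hB m f => ((shiftFunctor C m).map_isZero hB).eq_of_tgt f 0,
      fun _ _ e hB => hB.of_retract_right e.hom e.inv e.inv_hom_id,
      fun _ _ r s hsr hB => hB.of_retract_right r s hsr,
      fun _ hT _ h₁ h₃ => of_distTriang_right hT h₁ h₃⟩

lemma of_mem_addShifts_left (h : ShiftOrthogonal A W) {E : C} (hE : E ∈ addShifts A) :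
    ShiftOrthogonal E W :=
  Set.mem_sInter.1 hE {B | ShiftOrthogonal B W}
    ⟨h.shift_left,
      fun _ hB _ f => hB.eq_of_src f 0,
      fun _ _ e hB => hB.of_retract_left e.hom e.inv e.inv_hom_id,
      fun _ _ r s hsr hB => hB.of_retract_left r s hsr,
      fun _ hT _ h₁ h₃ => of_distTriang_left hT h₁ h₃⟩

end ShiftOrthogonal

namespace IsLeftMutation

variable {A Y Y' W : C}

lemma shiftOrthogonal (h : IsLeftMutation A Y Y') : ShiftOrthogonal A Y' :=
  let ⟨_, _, _, _, _, _, hY'⟩ := h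
  ShiftOrthogonal.of_shift_left hY'

lemma nonempty_addEquiv (h : IsLeftMutation A Y Y') (hW : ShiftOrthogonal W A) (m : ℤ) :
    Nonempty ((W ⟶ Y⟦m⟧) ≃+ (W ⟶ Y'⟦m⟧)) :=
  let ⟨_, _, _, _, hT, hE, _⟩ := h
  (hW.of_mem_addShifts_right hE).nonempty_addEquiv_of_distTriang hT m

lemma shiftOrthogonal_left (h : IsLeftMutation A Y Y') (hA : ShiftOrthogonal A W)
    (hY' : ShiftOrthogonal Y' W) : ShiftOrthogonal Y W :=
  let ⟨_, _, _, _, hT, hE, _⟩ := h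
  ShiftOrthogonal.of_distTriang_left hT (hA.of_mem_addShifts_left hE) hY'

end IsLeftMutation

section MutationChain

variable {n : ℕ} {A : Fin n → C} {Z : ℕ → C} {i : Fin n}

lemma nonempty_addEquiv_of_leftMutations
    (hmut : ∀ j : Fin n, (j : ℕ) < i → IsLeftMutation (A j) (Z j) (Z (j + 1)))
    {W : C} {a : ℕ} (ha : a ≤ i)
    (hW : ∀ j : Fin n, a ≤ j → (j : ℕ) < i → ShiftOrthogonal W (A j)) (m : ℤ) :
    Nonempty ((W ⟶ (Z a)⟦m⟧) ≃+ (W ⟶ (Z i)⟦m⟧)) := by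
  suffices key : ∀ b, a ≤ b → b ≤ i → Nonempty ((W ⟶ (Z a)⟦m⟧) ≃+ (W ⟶ (Z b)⟦m⟧)) from
    key i ha le_rfl
  intro b hab
  induction b, hab using Nat.le_induction with
  | base => exact fun _ => ⟨AddEquiv.refl _⟩
  | succ b hab ih =>
    intro hbi
    have hbi : b < i := hbi
    obtain ⟨e₁⟩ := ih hbi.le
    obtain ⟨e₂⟩ := (hmut ⟨b, hbi.trans i.isLt⟩ hbi).nonempty_addEquiv (hW _ hab hbi) m
    exact ⟨e₁.trans e₂⟩

lemma shiftOrthogonal_left_of_leftMutations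
    (hmut : ∀ j : Fin n, (j : ℕ) < i → IsLeftMutation (A j) (Z j) (Z (j + 1))) {W : C}
    (hA : ∀ j : Fin n, (j : ℕ) < i → ShiftOrthogonal (A j) W) (hZ : ShiftOrthogonal (Z i) W) :
    ShiftOrthogonal (Z 0) W :=
  Nat.decreasingInduction (motive := fun c _ => ShiftOrthogonal (Z c) W)
    (fun c hc ih => (hmut ⟨c, hc.trans i.isLt⟩ hc).shiftOrthogonal_left (hA _ hc) ih)
    hZ (Nat.zero_le _)

end MutationChain

namespace IsDualSeq

variable {n : ℕ} {X Y : Fin n → C}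

lemma shiftOrthogonal_dual_dual (hdual : IsDualSeq X Y) {j t : Fin n} (hjt : j < t) :
    ShiftOrthogonal (Y j) (Y t) := by
  induction t using WellFoundedLT.induction generalizing j with
  | _ t ih =>
    obtain ⟨Z, -, hmut, hZt⟩ := hdual t
    rw [← hZt]
    exact (hmut j hjt).shiftOrthogonal.of_nonempty_addEquiv
      (nonempty_addEquiv_of_leftMutations hmut hjt fun c hjc hct => ih c hct hjc)

lemma shiftOrthogonal_of_lt (hdual : IsDualSeq X Y) {s t : Fin n} (hst : s < t) :
    ShiftOrthogonal (X s) (Y t) := by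
  obtain ⟨Z, hZ₀, hmut, hZs⟩ := hdual s
  rw [← hZ₀]
  refine shiftOrthogonal_left_of_leftMutations hmut
    (fun c hcs => hdual.shiftOrthogonal_dual_dual (lt_trans hcs hst)) ?_
  rw [hZs]
  exact hdual.shiftOrthogonal_dual_dual hst

lemma shiftOrthogonal_of_gt (hdual : IsDualSeq X Y) (hexc : IsExceptionalSeq X) {s t : Fin n}
    (hts : t < s) : ShiftOrthogonal (X s) (Y t) := by
  induction t using WellFoundedLT.induction generalizing s with
  | _ t ih =>
    obtain ⟨Z, hZ₀, hmut, hZt⟩ := hdual t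
    have h₀ : ShiftOrthogonal (X s) (Z 0) := hZ₀ ▸ hexc.2 s t hts
    rw [← hZt]
    exact h₀.of_nonempty_addEquiv (nonempty_addEquiv_of_leftMutations hmut (Nat.zero_le _)
      fun c _ hct => ih c hct (lt_trans hct hts))

lemma nonempty_addEquiv (hdual : IsDualSeq X Y) (hexc : IsExceptionalSeq X) (s : Fin n)
    (m : ℤ) : Nonempty ((X s ⟶ (X s)⟦m⟧) ≃+ (X s ⟶ (Y s)⟦m⟧)) := by
  obtain ⟨Z, hZ₀, hmut, hZs⟩ := hdual s
  have e := nonempty_addEquiv_of_leftMutations hmut (Nat.zero_le _)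
    (fun c _ hcs => hdual.shiftOrthogonal_of_gt hexc hcs) m
  rwa [hZ₀, hZs] at e

end IsDualSeq

theorem dual_exceptional_sequence_hom_general
    {n : ℕ} (X Y : Fin n → C) (hexc : IsExceptionalSeq X) (hdual : IsDualSeq X Y) :
    ∀ s t : Fin n, ∀ m : ℤ,
      (s = t ∧ m = 0 → Nonempty ((X s ⟶ (Y t)⟦m⟧) ≃+ (X s ⟶ X s))) ∧
      (¬ (s = t ∧ m = 0) → ∀ f : X s ⟶ (Y t)⟦m⟧, f = 0) := by
  intro s t m
  refine ⟨?_, fun hne f => ?_⟩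
  · rintro ⟨rfl, rfl⟩
    obtain ⟨e⟩ := hdual.nonempty_addEquiv hexc s 0
    exact ⟨e.symm.trans (AddEquiv.mk' ((shiftFunctorZero C ℤ).app (X s)).homToEquiv
      fun f g => Preadditive.add_comp _ _ _ f g _)⟩
  · rcases lt_trichotomy s t with hst | rfl | hts
    · exact hdual.shiftOrthogonal_of_lt hst m f
    · obtain ⟨e⟩ := hdual.nonempty_addEquiv hexc s m
      exact e.forall_eq_zero ((hexc.1 s).2 m fun hm => hne ⟨rfl, hm⟩) f
    · exact hdual.shiftOrthogonal_of_gt hexc hts m f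

/-- Let `T` be a `k`-linear triangulated category with finite total Hom-spaces, and let
`(X_1, …, X_n)` be an exceptional sequence with totally left-mutated (dual) sequence
`(X_n^∨, …, X_1^∨) = μ⁺_rev(X_1, …, X_n)`. Then for all `1 ≤ s, t ≤ n` and `m ∈ ℤ`,
`Hom(X_s, X_t^∨[m])` is a division ring (isomorphic to `End(X_s)`) if `s = t` and
`m = 0`, and vanishes otherwise. -/
theorem dual_exceptional_sequence_hom
    {k : Type u'} [Field k] [Linear k C]
    (hfindim : ∀ A B : C, FiniteDimensional k (A ⟶ B))
    (hlocfin : ∀ A B : C, Set.Finite {i : ℤ | ∃ f : A ⟶ B⟦i⟧, f ≠ 0})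
    {n : ℕ} (X Y : Fin n → C) (hexc : IsExceptionalSeq X) (hdual : IsDualSeq X Y) :
    ∀ s t : Fin n, ∀ m : ℤ,
      (s = t ∧ m = 0 → Nonempty ((X s ⟶ (Y t)⟦m⟧) ≃+ (X s ⟶ X s))) ∧
      (¬ (s = t ∧ m = 0) → ∀ f : X s ⟶ (Y t)⟦m⟧, f = 0) :=
  dual_exceptional_sequence_hom_general X Y hexc hdual
end
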